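/- (Attainment of the I-Max equivalence.) In the setting of the previous statement, if additionally 0 < P(y=1|m=i) < 1 for every i, then the infimum of L over φ : Fin M → ℝ is attained at φ*(i) = log( P(y=1|m=i) / P(y=0|m=i) ), and at this choice L(φ*) = −I(y;m). Hence min_φ L(φ) = −I(y;m), so maximizing I(y;m) over quantizers is equivalent to minimizing L over quantizers and parameters jointly. -/

import Mathlib

open scoped BigOperators

attribute [local instance] Classical.propDecidable

/-- Probability of an event on a finite probability space given by a mass function. -/
noncomputable def Pr {Ω : Type*} [Fintype Ω] (P : Ω → ℝ) (E : Ω → Prop) : ℝ :=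
  ∑ ω, if E ω then P ω else 0

/-- Discrete mutual information `I(U;V)` (convention: terms with zero joint
probability contribute `0`). -/
noncomputable def mi {Ω α β : Type*} [Fintype Ω] [Fintype α] [Fintype β]
    (P : Ω → ℝ) (U : Ω → α) (V : Ω → β) : ℝ :=
  ∑ a : α, ∑ b : β,
    if Pr P (fun ω => U ω = a ∧ V ω = b) = 0 then 0
    else Pr P (fun ω => U ω = a ∧ V ω = b) *
      Real.log (Pr P (fun ω => U ω = a ∧ V ω = b) /
        (Pr P (fun ω => U ω = a) * Pr P (fun ω => V ω = b)))

/-- Shannon entropy `H(U)` (convention: `0 log 0 = 0`). -/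
noncomputable def ent {Ω α : Type*} [Fintype Ω] [Fintype α]
    (P : Ω → ℝ) (U : Ω → α) : ℝ :=
  -∑ a : α,
    if Pr P (fun ω => U ω = a) = 0 then 0
    else Pr P (fun ω => U ω = a) * Real.log (Pr P (fun ω => U ω = a))

/-- Conditional entropy `H(U|V)` (convention: terms with zero joint probability
contribute `0`). -/
noncomputable def condEnt {Ω α β : Type*} [Fintype Ω] [Fintype α] [Fintype β]
    (P : Ω → ℝ) (U : Ω → α) (V : Ω → β) : ℝ :=
  -∑ a : α, ∑ b : β,
    if Pr P (fun ω => U ω = a ∧ V ω = b) = 0 then 0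
    else Pr P (fun ω => U ω = a ∧ V ω = b) *
      Real.log (Pr P (fun ω => U ω = a ∧ V ω = b) / Pr P (fun ω => V ω = b))

noncomputable def sigmoid (x : ℝ) : ℝ := 1 / (1 + Real.exp (-x))

lemma sigmoid_pos (x : ℝ) : 0 < sigmoid x := by
  unfold sigmoid; positivity

lemma sigmoid_neg (x : ℝ) : sigmoid (-x) = 1 - sigmoid x := by
  unfold sigmoid
  have h1 : (0:ℝ) < 1 + Real.exp (-x) := by positivity
  have h2 : (0:ℝ) < 1 + Real.exp (-(-x)) := by positivity
  have h3 : Real.exp (-x) * Real.exp x = 1 := by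
    rw [← Real.exp_add]; simp
  rw [neg_neg] at h2 ⊢
  field_simp
  nlinarith [h3]

lemma sigmoid_lt_one (x : ℝ) : sigmoid x < 1 := by
  have := sigmoid_pos (-x)
  rw [sigmoid_neg] at this; linarith

lemma sigmoid_log_div (a b : ℝ) (ha : 0 < a) (hb : 0 < b) :
    sigmoid (Real.log (a / b)) = a / (a + b) := by
  unfold sigmoid
  rw [← Real.log_inv, Real.exp_log (by positivity)]
  rw [inv_div]
  field_simp

lemma key_ineq (P1 P0 a b : ℝ) (hP1 : 0 < P1) (hP0 : 0 < P0)
    (ha : 0 < a) (hb : 0 < b) (s : ℝ) (hs0 : 0 < s) (hs1 : s < 1) :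
    a * Real.log (P1 / (a/(a+b))) + b * Real.log (P0 / (b/(a+b))) ≤
    a * Real.log (P1 / s) + b * Real.log (P0 / (1-s)) := by
  have hq : 0 < a + b := by linarith
  have h1 : Real.log (s / (a/(a+b))) ≤ s / (a/(a+b)) - 1 :=
    Real.log_le_sub_one_of_pos (by positivity)
  have h2 : Real.log ((1-s) / (b/(a+b))) ≤ (1-s) / (b/(a+b)) - 1 :=
    Real.log_le_sub_one_of_pos (div_pos (by linarith) (by positivity))
  have e1 : Real.log (P1 / s) = Real.log P1 - Real.log s := Real.log_div hP1.ne' hs0.ne'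
  have e2 : Real.log (P0 / (1-s)) = Real.log P0 - Real.log (1-s) :=
    Real.log_div hP0.ne' (by intro h; linarith [h])
  have e3 : Real.log (P1 / (a/(a+b))) = Real.log P1 - Real.log (a/(a+b)) :=
    Real.log_div hP1.ne' (by positivity)
  have e4 : Real.log (P0 / (b/(a+b))) = Real.log P0 - Real.log (b/(a+b)) :=
    Real.log_div hP0.ne' (by positivity)
  have f1 : Real.log (s / (a/(a+b))) = Real.log s - Real.log (a/(a+b)) :=
    Real.log_div hs0.ne' (by positivity)
  have f2 : Real.log ((1-s) / (b/(a+b))) = Real.log (1-s) - Real.log (b/(a+b)) :=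
    Real.log_div (by intro h; linarith [h]) (by positivity)
  have g1 : s / (a/(a+b)) = s * (a+b) / a := by field_simp
  have g2 : (1-s) / (b/(a+b)) = (1-s) * (a+b) / b := by field_simp
  rw [f1] at h1; rw [f2] at h2; rw [g1] at h1; rw [g2] at h2
  rw [e1, e2, e3, e4]
  have h1' : a * (Real.log s - Real.log (a/(a+b))) ≤ a * (s * (a+b) / a - 1) :=
    mul_le_mul_of_nonneg_left h1 ha.le
  have h2' : b * (Real.log (1-s) - Real.log (b/(a+b))) ≤ b * ((1-s) * (a+b) / b - 1) :=
    mul_le_mul_of_nonneg_left h2 hb.le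
  have c1 : a * (s * (a+b) / a - 1) = s * (a+b) - a := by field_simp
  have c2 : b * ((1-s) * (a+b) / b - 1) = (1-s) * (a+b) - b := by field_simp
  nlinarith [h1', h2']

lemma Pr_congr {Ω : Type*} [Fintype Ω] (P : Ω → ℝ) (E F : Ω → Prop)
    (h : ∀ ω, E ω ↔ F ω) : Pr P E = Pr P F := by
  unfold Pr
  exact Finset.sum_congr rfl fun ω _ => if_congr (h ω) rfl rfl

lemma Pr_split {Ω : Type*} [Fintype Ω] {M : ℕ} (P : Ω → ℝ)
    (y : Ω → Fin 2) (m : Ω → Fin M) (i : Fin M) :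
    Pr P (fun ω => m ω = i) =
      Pr P (fun ω => y ω = 1 ∧ m ω = i) + Pr P (fun ω => y ω = 0 ∧ m ω = i) := by
  unfold Pr
  rw [← Finset.sum_add_distrib]
  refine Finset.sum_congr rfl fun ω _ => ?_
  by_cases h0 : y ω = 0
  · have h1 : y ω ≠ 1 := by rw [h0]; decide
    by_cases hm : m ω = i <;> simp [h0, h1, hm]
  · have h1 : y ω = 1 := by omega
    by_cases hm : m ω = i <;> simp [h0, h1, hm]


/-- Attainment of the I-Max equivalence: the infimum of `L` is attained at
`φ*(i) = log(P(y=1|m=i)/P(y=0|m=i))`, where `L(φ*) = −I(y;m)`. -/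
theorem imax_equivalence_attained {Ω : Type*} [Fintype Ω] {M : ℕ}
    (P : Ω → ℝ) (hP : ∀ ω, 0 ≤ P ω) (hsum : ∑ ω, P ω = 1)
    (y : Ω → Fin 2) (m : Ω → Fin M)
    (hm : ∀ i : Fin M, 0 < Pr P (fun ω => m ω = i))
    (hy0 : 0 < Pr P (fun ω => y ω = 0))
    (hy1 : 0 < Pr P (fun ω => y ω = 1))
    (hcond : ∀ i : Fin M,
      Pr P (fun ω => y ω = 1 ∧ m ω = i) / Pr P (fun ω => m ω = i) ∈ Set.Ioo (0:ℝ) 1)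
    (L : (Fin M → ℝ) → ℝ)
    (hL : L = fun φ => ∑ i : Fin M, ∑ y' : Fin 2,
      Pr P (fun ω => m ω = i ∧ y ω = y') *
        Real.log (Pr P (fun ω => y ω = y') /
          sigmoid ((2 * ((y' : ℕ) : ℝ) - 1) * φ i)))
    (φstar : Fin M → ℝ)
    (hφstar : φstar = fun i => Real.log
      ((Pr P (fun ω => y ω = 1 ∧ m ω = i) / Pr P (fun ω => m ω = i)) /
       (Pr P (fun ω => y ω = 0 ∧ m ω = i) / Pr P (fun ω => m ω = i)))) :
    (∀ φ : Fin M → ℝ, L φstar ≤ L φ) ∧ L φstar = -(mi P y m) := by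
  -- notation
  set A : Fin M → ℝ := fun i => Pr P (fun ω => y ω = 1 ∧ m ω = i) with hA
  set B : Fin M → ℝ := fun i => Pr P (fun ω => y ω = 0 ∧ m ω = i) with hB
  have hsplit : ∀ i, Pr P (fun ω => m ω = i) = A i + B i := fun i => Pr_split P y m i
  have hApos : ∀ i, 0 < A i := by
    intro i
    have h := mul_pos (hcond i).1 (hm i)
    rwa [div_mul_cancel₀ _ (hm i).ne'] at h
  have hBpos : ∀ i, 0 < B i := by
    intro i
    have h := (hcond i).2
    rw [div_lt_one (hm i)] at h
    rw [hsplit i] at h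
    linarith
  -- rewrite L in explicit form
  have hLexp : ∀ φ : Fin M → ℝ, L φ = ∑ i : Fin M,
      (A i * Real.log (Pr P (fun ω => y ω = 1) / sigmoid (φ i)) +
       B i * Real.log (Pr P (fun ω => y ω = 0) / (1 - sigmoid (φ i)))) := by
    intro φ
    rw [hL]
    refine Finset.sum_congr rfl fun i _ => ?_
    rw [Fin.sum_univ_two]
    have c0 : (2 * (((0 : Fin 2) : ℕ) : ℝ) - 1) * φ i = -(φ i) := by
      norm_num
    have c1 : (2 * (((1 : Fin 2) : ℕ) : ℝ) - 1) * φ i = φ i := by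
      norm_num
    rw [c0, c1, sigmoid_neg]
    have com0 : Pr P (fun ω => m ω = i ∧ y ω = 0) = B i :=
      Pr_congr P _ _ fun ω => and_comm
    have com1 : Pr P (fun ω => m ω = i ∧ y ω = 1) = A i :=
      Pr_congr P _ _ fun ω => and_comm
    rw [com0, com1]
    ring
  -- value of sigmoid at φstar
  have hsig : ∀ i, sigmoid (φstar i) = A i / (A i + B i) := by
    intro i
    rw [hφstar]
    have hqne := (hm i).ne'
    have hbne := (hBpos i).ne'
    have heq : (A i / Pr P (fun ω => m ω = i)) / (B i / Pr P (fun ω => m ω = i))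
        = A i / B i := by
      field_simp
    simp only
    rw [heq, sigmoid_log_div _ _ (hApos i) (hBpos i)]
  have hsig' : ∀ i, 1 - sigmoid (φstar i) = B i / (A i + B i) := by
    intro i
    rw [hsig i]
    have h : 0 < A i + B i := by have := hApos i; have := hBpos i; linarith
    field_simp
    ring
  -- Part 1 : minimality
  constructor
  · intro φ
    rw [hLexp φ, hLexp φstar]
    refine Finset.sum_le_sum fun i _ => ?_
    rw [hsig' i, hsig i]
    exact key_ineq _ _ _ _ hy1 hy0 (hApos i) (hBpos i) (sigmoid (φ i))
      (sigmoid_pos _) (sigmoid_lt_one _)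
  -- Part 2 : value
  · rw [hLexp φstar]
    unfold mi
    rw [Fin.sum_univ_two, ← Finset.sum_add_distrib, ← Finset.sum_neg_distrib]
    refine Finset.sum_congr rfl fun i _ => ?_
    rw [hsig' i, hsig i]
    have hAi := hApos i
    have hBi := hBpos i
    have hq : 0 < A i + B i := by linarith
    have hAne : Pr P (fun ω => y ω = (0:Fin 2) ∧ m ω = i) ≠ 0 := (hBpos i).ne'
    have hBne : Pr P (fun ω => y ω = (1:Fin 2) ∧ m ω = i) ≠ 0 := (hApos i).ne'
    rw [if_neg hAne, if_neg hBne]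
    have hBeq : Pr P (fun ω => y ω = (0:Fin 2) ∧ m ω = i) = B i := rfl
    have hAeq : Pr P (fun ω => y ω = (1:Fin 2) ∧ m ω = i) = A i := rfl
    have hsm : Pr P (fun ω => m ω = i) = A i + B i := hsplit i
    rw [hBeq, hAeq, hsm]
    have l1 : Real.log (Pr P (fun ω => y ω = 1) / (A i / (A i + B i)))
        = - Real.log (A i / (Pr P (fun ω => y ω = 1) * (A i + B i))) := by
      rw [← Real.log_inv]
      congr 1
      field_simp
    have l0 : Real.log (Pr P (fun ω => y ω = 0) / (B i / (A i + B i)))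
        = - Real.log (B i / (Pr P (fun ω => y ω = 0) * (A i + B i))) := by
      rw [← Real.log_inv]
      congr 1
      field_simp
    rw [l1, l0]
    ring
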